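/- Let H₀, H₁, H₂ be Hilbert spaces, A₀ : D(A₀) ⊆ H₀ → H₁ and A₁ : D(A₁) ⊆ H₁ → H₂ densely defined closed operators with range(A₀) ⊆ ker(A₁) (a Hilbert complex). Assume the embedding D(A₁) ∩ D(A₀*) (with combined graph norm) into H₁ is compact. Then ker(A₁)/range-closure splits as ker(A₁) = closure(range A₀) ⊕ (ker A₁ ∩ ker A₀*), the cohomology space ker A₁ ∩ ker A₀* is finite dimensional, and both range A₀ and range A₁ are closed. -/

import Mathlib

/-!
Compactness of `D(A₁) ∩ D(A₀*)` in `H₁` yields Poincaré-type estimates `‖v‖ ≤ c ‖A₁ v‖` on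
`(ker A₁)ᗮ` and `‖v‖ ≤ c ‖A₀* v‖` on `(ker A₀*)ᗮ = closure (range A₀)`: otherwise normalized
vectors with images tending to zero would have a convergent subsequence whose limit is a unit
vector lying both in a kernel and in its orthogonal complement. The first estimate makes
`range A₁` closed directly. The second makes `A₀* v ↦ ⟪y, v⟫` a bounded functional for every
`y ∈ closure (range A₀)`; its Riesz representative `x` satisfies `A₀** x = y`, and `A₀** = A₀`
because `A₀` is closed, so `range A₀` is closed. The same compactness makes the closed unit ball
of `ker A₁ ∩ ker A₀*` compact, hence that space is finite dimensional, and the decomposition is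
the orthogonal splitting of `ker A₁` along its closed subspace `closure (range A₀)`, whose
complement `(range A₀)ᗮ` is `ker A₀*`.
-/

open Filter Topology
open scoped RealInnerProductSpace LinearPMap

theorem Submodule.finiteDimensional_of_forall_exists_tendsto {𝕜 E : Type*}
    [NontriviallyNormedField 𝕜] [CompleteSpace 𝕜] [NormedAddCommGroup E] [NormedSpace 𝕜 E]
    (K : Submodule 𝕜 E) (hK : IsClosed (K : Set E))
    (h : ∀ u : ℕ → E, (∀ n, u n ∈ K) → (∀ n, ‖u n‖ ≤ 1) →
      ∃ φ : ℕ → ℕ, StrictMono φ ∧ ∃ y, Tendsto (fun n => u (φ n)) atTop (𝓝 y)) :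
    FiniteDimensional 𝕜 K := by
  refine .of_isCompact_closedBall₀ 𝕜 one_pos (IsSeqCompact.isCompact fun u hu => ?_)
  obtain ⟨φ, hφ, y, hy⟩ := h (fun n => u n) (fun n => (u n).2) fun n => by simpa using hu n
  have hyK : y ∈ K := hK.mem_of_tendsto hy (Eventually.of_forall fun n => (u (φ n)).2)
  refine ⟨⟨y, hyK⟩, ?_, φ, hφ, tendsto_subtype_rng.2 hy⟩
  simpa using le_of_tendsto hy.norm (Eventually.of_forall fun n => by simpa using hu (φ n))

namespace LinearPMap

variable {E F G : Type*}
  [NormedAddCommGroup E] [InnerProductSpace ℝ E]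
  [NormedAddCommGroup F] [InnerProductSpace ℝ F]
  [NormedAddCommGroup G] [InnerProductSpace ℝ G]

def ker (T : E →ₗ.[ℝ] F) : Submodule ℝ E :=
  (LinearMap.ker T.toFun).map T.domain.subtype

variable {T : E →ₗ.[ℝ] F}

theorem mem_ker {x : E} : x ∈ T.ker ↔ ∃ h : x ∈ T.domain, T ⟨x, h⟩ = 0 :=
  ⟨fun ⟨⟨_, hx⟩, h0, hz⟩ => hz ▸ ⟨hx, h0⟩, fun ⟨hx, h0⟩ => ⟨⟨x, hx⟩, h0, rfl⟩⟩

theorem mem_ker_iff_mem_graph {x : E} : x ∈ T.ker ↔ (x, 0) ∈ T.graph := by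
  rw [mem_ker, mem_graph_iff]
  refine ⟨fun ⟨hx, h0⟩ => ⟨⟨x, hx⟩, rfl, h0⟩, fun ⟨⟨z, hz⟩, (hzx : z = x), h0⟩ => ?_⟩
  subst hzx
  exact ⟨hz, h0⟩

theorem IsClosed.mem_graph_of_tendsto (hT : T.IsClosed) {u : ℕ → T.domain} {x : E} {y : F}
    (hu : Tendsto (fun n => (u n : E)) atTop (𝓝 x))
    (hTu : Tendsto (fun n => T (u n)) atTop (𝓝 y)) :
    (x, y) ∈ T.graph :=
  hT.mem_of_tendsto (hu.prodMk_nhds hTu) (Eventually.of_forall fun n => T.mem_graph (u n))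

theorem IsClosed.isClosed_ker (hT : T.IsClosed) : _root_.IsClosed (T.ker : Set E) := by
  have : (T.ker : Set E) = (fun x => (x, (0 : F))) ⁻¹' T.graph :=
    Set.ext fun _ => mem_ker_iff_mem_graph
  rw [this]
  exact IsClosed.preimage (continuous_id.prodMk continuous_const) hT

theorem IsClosed.exists_mem_orthogonal_ker [CompleteSpace E] (hT : T.IsClosed) (x : T.domain) :
    ∃ v : T.domain, (v : E) ∈ T.kerᗮ ∧ (x : E) - v ∈ T.ker ∧ T v = T x := by
  have : CompleteSpace T.ker := hT.isClosed_ker.completeSpace_coe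
  obtain ⟨hp, hp0⟩ := mem_ker.1 (T.ker.starProjection_apply_mem (x : E))
  refine ⟨x - ⟨_, hp⟩, T.ker.sub_starProjection_mem_orthogonal _, ?_, ?_⟩
  · simp only [AddSubgroupClass.coe_sub, sub_sub_cancel, Submodule.starProjection_apply_mem]
  · rw [T.map_sub, hp0, sub_zero]

theorem orthogonal_range_eq_ker_adjoint [CompleteSpace E] (hT : Dense (T.domain : Set E)) :
    (LinearMap.range T.toFun)ᗮ = T†.ker := by
  ext y
  rw [Submodule.mem_orthogonal', mem_ker]
  constructor
  · intro hy
    have h0 : ∀ x : T.domain, ⟪(0 : E), x⟫ = ⟪y, T x⟫ := fun x => by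
      rw [inner_zero_left]; exact (hy _ ⟨x, rfl⟩).symm
    exact ⟨mem_adjoint_domain_of_exists y ⟨0, h0⟩, adjoint_apply_eq hT _ h0⟩
  · rintro ⟨hy, h0⟩ _ ⟨x, rfl⟩
    change ⟪((⟨y, hy⟩ : T†.domain) : F), T x⟫ = 0
    rw [← adjoint_isFormalAdjoint hT, h0, inner_zero_left]

theorem IsClosed.isClosed_range_of_norm_le [CompleteSpace E] (hT : T.IsClosed) {c : ℝ}
    (hc : ∀ v : T.domain, (v : E) ∈ T.kerᗮ → ‖(v : E)‖ ≤ c * ‖T v‖) :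
    _root_.IsClosed (LinearMap.range T.toFun : Set F) := by
  refine isClosed_of_closure_subset fun y hy => ?_
  obtain ⟨Tx, hTx, hlim⟩ := mem_closure_iff_seq_limit.1 hy
  choose x hx using fun n => hTx n
  choose v hvK _ hv using fun n => hT.exists_mem_orthogonal_ker (x n)
  have hcauchy : CauchySeq fun n => (v n : E) := by
    have hbound : ∀ m n, dist (v m : E) (v n) ≤ c * dist (Tx m) (Tx n) := fun m n => by
      simpa [dist_eq_norm, ← hv, ← hx, ← T.map_sub] using
        hc (v m - v n) (Submodule.sub_mem _ (hvK m) (hvK n))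
    have hTx := cauchySeq_iff_tendsto_dist_atTop_0.1 hlim.cauchySeq
    refine cauchySeq_iff_tendsto_dist_atTop_0.2 <|
      squeeze_zero (fun _ => dist_nonneg) (fun p => hbound p.1 p.2) ?_
    simpa using hTx.const_mul c
  obtain ⟨l, hl⟩ := cauchySeq_tendsto_of_complete hcauchy
  have hTv : Tendsto (fun n => T (v n)) atTop (𝓝 y) := by
    simpa only [hv, show ∀ n, T (x n) = Tx n from hx] using hlim
  obtain ⟨z, -, hz⟩ := T.mem_graph_iff.1 (hT.mem_graph_of_tendsto hl hTv)
  exact ⟨z, hz⟩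

theorem exists_inner_apply_eq_of_norm_le [CompleteSpace E] (S : F →ₗ.[ℝ] E)
    (V : Submodule ℝ F) {c : ℝ} (hc : ∀ v : S.domain, (v : F) ∈ V → ‖(v : F)‖ ≤ c * ‖S v‖)
    (y : F) : ∃ x : E, ∀ v : S.domain, (v : F) ∈ V → ⟪x, S v⟫ = ⟪y, v⟫ := by
  let D : Submodule ℝ S.domain := V.comap S.domain.subtype
  let L : D →ₗ[ℝ] E := S.toFun ∘ₗ D.subtype
  have hL : Function.Injective L := by
    refine (injective_iff_map_eq_zero L).2 fun v hv => ?_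
    have := hc v v.2
    simp only [show S v = 0 from hv, norm_zero, mul_zero, norm_le_zero_iff] at this
    exact Subtype.ext (Subtype.ext this)
  let e := LinearEquiv.ofInjective L hL
  let f : LinearMap.range L →ₗ[ℝ] ℝ :=
    innerₛₗ ℝ y ∘ₗ S.domain.subtype ∘ₗ D.subtype ∘ₗ e.symm.toLinearMap
  have hf : ∀ w, ‖f w‖ ≤ ‖y‖ * c * ‖w‖ := fun w => by
    have hw : S (e.symm w : S.domain) = w := congrArg Subtype.val (e.apply_symm_apply w)
    calc ‖f w‖ ≤ ‖y‖ * ‖((e.symm w : S.domain) : F)‖ := norm_inner_le_norm _ _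
      _ ≤ ‖y‖ * (c * ‖w‖) := by
          gcongr
          have := hc _ (e.symm w).2
          rwa [hw] at this
      _ = ‖y‖ * c * ‖w‖ := by ring
  obtain ⟨g, hg, -⟩ := exists_extension_norm_eq _ (f.mkContinuous _ hf)
  refine ⟨(InnerProductSpace.toDual ℝ E).symm g, fun v hv => ?_⟩
  have hev : e ⟨v, hv⟩ = ⟨S v, ⟨v, hv⟩, rfl⟩ := Subtype.ext (LinearEquiv.ofInjective_apply _ _)
  rw [InnerProductSpace.toDual_symm_apply]
  refine (hg ⟨S v, ⟨v, hv⟩, rfl⟩).trans ?_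
  simp [f, ← hev]

/-- `T = T**` for closed `T`: the graph is closed, so it is its own double orthogonal complement
in `E ⊕₂ F`, and vectors orthogonal to the graph are of the form `(T* v, -v)`. -/
theorem IsClosed.mem_graph_of_forall_inner_adjoint [CompleteSpace E] [CompleteSpace F]
    (hT : T.IsClosed) (hd : Dense (T.domain : Set E)) {x : E} {y : F}
    (h : ∀ v : T†.domain, ⟪x, T† v⟫ = ⟪y, v⟫) : (x, y) ∈ T.graph := by
  let Γ : Submodule ℝ (WithLp 2 (E × F)) :=
    T.graph.comap (WithLp.linearEquiv 2 ℝ (E × F)).toLinearMap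
  have hΓ : _root_.IsClosed (Γ : Set (WithLp 2 (E × F))) :=
    hT.preimage (WithLp.prod_continuous_ofLp 2 E F)
  suffices WithLp.toLp 2 (x, y) ∈ Γᗮᗮ by
    rwa [Γ.orthogonal_orthogonal_eq_closure, hΓ.submodule_topologicalClosure_eq] at this
  refine (Submodule.mem_orthogonal' _ _).2 fun q hq => ?_
  have hq' : ∀ z : T.domain, ⟪(q.ofLp.1 : E), z⟫ = ⟪-q.ofLp.2, T z⟫ := fun z => by
    have := (Submodule.mem_orthogonal' _ _).1 hq (WithLp.toLp 2 (z, T z)) (T.mem_graph z)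
    rw [WithLp.prod_inner_apply, WithLp.ofLp_toLp] at this
    rw [inner_neg_left]
    linarith
  have hdom : -q.ofLp.2 ∈ T†.domain := mem_adjoint_domain_of_exists _ ⟨_, hq'⟩
  have hadj : T† ⟨_, hdom⟩ = q.ofLp.1 := adjoint_apply_eq hd _ hq'
  have := h ⟨_, hdom⟩
  rw [hadj, inner_neg_right] at this
  rw [WithLp.prod_inner_apply, WithLp.ofLp_toLp]
  linarith

theorem isClosed_range_of_adjoint_norm_le [CompleteSpace E] [CompleteSpace F]
    (hd : Dense (T.domain : Set E)) (hT : T.IsClosed) {c : ℝ}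
    (hc : ∀ v : T†.domain, (v : F) ∈ T†.kerᗮ → ‖(v : F)‖ ≤ c * ‖T† v‖) :
    _root_.IsClosed (LinearMap.range T.toFun : Set F) := by
  refine isClosed_of_closure_subset fun y hy => ?_
  have hyK : y ∈ T†.kerᗮ := by
    rw [← orthogonal_range_eq_ker_adjoint hd, Submodule.orthogonal_orthogonal_eq_closure]
    exact hy
  obtain ⟨x, hx⟩ := exists_inner_apply_eq_of_norm_le T† _ hc y
  have hxy : ∀ v : T†.domain, ⟪x, T† v⟫ = ⟪y, v⟫ := fun v => by
    obtain ⟨w, hwK, hvw, hw⟩ := (adjoint_isClosed hd).exists_mem_orthogonal_ker v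
    have hyw := (Submodule.mem_orthogonal' _ _).1 hyK _ hvw
    rw [inner_sub_right, sub_eq_zero] at hyw
    rw [← hw, hx w hwK, hyw]
  obtain ⟨z, -, hz⟩ := T.mem_graph_iff.1 (hT.mem_graph_of_forall_inner_adjoint hd hxy)
  exact ⟨z, hz⟩

theorem exists_seq_norm_eq_one_of_not_exists_norm_le {V : Submodule ℝ E}
    (h : ¬∃ c : ℝ, ∀ v : T.domain, (v : E) ∈ V → ‖(v : E)‖ ≤ c * ‖T v‖) :
    ∃ u : ℕ → T.domain, (∀ n, (u n : E) ∈ V) ∧ (∀ n, ‖(u n : E)‖ = 1) ∧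
      ∀ n, ‖T (u n)‖ ≤ 1 / (n + 1) := by
  push Not at h
  choose v hvV hv using fun n : ℕ => h (n + 1)
  have hpos : ∀ n, 0 < ‖(v n : E)‖ := fun n => (by positivity : (0 : ℝ) ≤ _).trans_lt (hv n)
  refine ⟨fun n => ‖(v n : E)‖⁻¹ • v n, fun n => V.smul_mem _ (hvV n), fun n => ?_, fun n => ?_⟩
  · exact norm_smul_inv_norm (norm_pos_iff.1 (hpos n))
  · rw [T.map_smul, norm_smul, Real.norm_of_nonneg (inv_nonneg.2 (hpos n).le),
      inv_mul_le_iff₀ (hpos n), mul_one_div, le_div_iff₀ (by positivity)]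
    linarith [hv n]

/-- Sequential form of: `D(A) ∩ D(B)`, normed by `‖u‖² + ‖A u‖² + ‖B u‖²`, embeds compactly
into `E`. -/
def CompactJointEmbedding (A : E →ₗ.[ℝ] F) (B : E →ₗ.[ℝ] G) : Prop :=
  ∀ (u : ℕ → E) (hu₁ : ∀ n, u n ∈ A.domain) (hu₀ : ∀ n, u n ∈ B.domain),
    (∃ C : ℝ, ∀ n, ‖u n‖ ^ 2 + ‖A ⟨u n, hu₁ n⟩‖ ^ 2 + ‖B ⟨u n, hu₀ n⟩‖ ^ 2 ≤ C) →
      ∃ φ : ℕ → ℕ, StrictMono φ ∧ ∃ y : E, Tendsto (fun n => u (φ n)) atTop (nhds y)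

variable {A : E →ₗ.[ℝ] F} {B : E →ₗ.[ℝ] G}

theorem CompactJointEmbedding.symm (h : CompactJointEmbedding A B) : CompactJointEmbedding B A :=
  fun u hB hA ⟨C, hC⟩ => h u hA hB ⟨C, fun n => (add_right_comm _ _ _).trans_le (hC n)⟩

theorem CompactJointEmbedding.finiteDimensional (h : CompactJointEmbedding A B)
    (hA : A.IsClosed) (hB : B.IsClosed) : FiniteDimensional ℝ ↥(A.ker ⊓ B.ker) := by
  refine (A.ker ⊓ B.ker).finiteDimensional_of_forall_exists_tendsto
    (hA.isClosed_ker.inter hB.isClosed_ker) fun u hu hu1 => ?_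
  choose hA' hA0 using fun n => mem_ker.1 (hu n).1
  choose hB' hB0 using fun n => mem_ker.1 (hu n).2
  refine h u hA' hB' ⟨1, fun n => ?_⟩
  simp only [hA0, hB0, norm_zero]
  nlinarith [hu1 n, norm_nonneg (u n)]

theorem CompactJointEmbedding.exists_norm_le (h : CompactJointEmbedding A B) (hA : A.IsClosed)
    (hAB : A.kerᗮ ≤ B.ker) :
    ∃ c : ℝ, ∀ v : A.domain, (v : E) ∈ A.kerᗮ → ‖(v : E)‖ ≤ c * ‖A v‖ := by
  by_contra hne
  obtain ⟨u, huK, hu1, hAu⟩ := exists_seq_norm_eq_one_of_not_exists_norm_le hne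
  choose hB hB0 using fun n => mem_ker.1 (hAB (huK n))
  have hAu1 : ∀ n, ‖A (u n)‖ ≤ 1 := fun n =>
    (hAu n).trans (div_le_one_of_le₀ (by linarith [n.cast_nonneg (α := ℝ)]) (by positivity))
  obtain ⟨φ, hφ, w, hw⟩ := h (fun n => u n) (fun n => (u n).2) hB ⟨2, fun n => by
    simp only [hu1, hB0, norm_zero]
    nlinarith [hAu1 n, norm_nonneg (A (u n))]⟩
  have hA0 : Tendsto (fun n => A (u (φ n))) atTop (𝓝 0) :=
    squeeze_zero_norm (fun n => hAu (φ n))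
      (tendsto_one_div_add_atTop_nhds_zero_nat.comp hφ.tendsto_atTop)
  have hwK : w ∈ A.ker := mem_ker_iff_mem_graph.2 (hA.mem_graph_of_tendsto hw hA0)
  have hwK' : w ∈ A.kerᗮ :=
    A.ker.isClosed_orthogonal.mem_of_tendsto hw (Eventually.of_forall fun n => huK (φ n))
  have hw1 : ‖w‖ = 1 := tendsto_nhds_unique hw.norm (by simp [hu1])
  simp [Submodule.disjoint_def.1 A.ker.orthogonal_disjoint w hwK hwK'] at hw1

end LinearPMap

open LinearPMap in
theorem stmt18_general {H₀ H₁ H₂ : Type*}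
    [NormedAddCommGroup H₀] [InnerProductSpace ℝ H₀] [CompleteSpace H₀]
    [NormedAddCommGroup H₁] [InnerProductSpace ℝ H₁] [CompleteSpace H₁]
    [NormedAddCommGroup H₂] [InnerProductSpace ℝ H₂] [CompleteSpace H₂]
    (A₀ : H₀ →ₗ.[ℝ] H₁) (A₁ : H₁ →ₗ.[ℝ] H₂)
    (hdense₀ : Dense (A₀.domain : Set H₀))
    (hclosed₀ : IsClosed (A₀.graph : Set (H₀ × H₁)))
    (hclosed₁ : IsClosed (A₁.graph : Set (H₁ × H₂)))
    -- complex property : range A₀ ⊆ ker A₁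
    (hcomplex : ∀ x : A₀.domain, ∃ h : A₀ x ∈ A₁.domain, A₁ ⟨A₀ x, h⟩ = 0)
    -- compact embedding of D(A₁) ∩ D(A₀*) (combined graph norm) into H₁
    (hcpt : ∀ (u : ℕ → H₁) (hu₁ : ∀ n, u n ∈ A₁.domain) (hu₀ : ∀ n, u n ∈ A₀.adjoint.domain),
      (∃ C : ℝ, ∀ n, ‖u n‖ ^ 2 + ‖A₁ ⟨u n, hu₁ n⟩‖ ^ 2 + ‖A₀.adjoint ⟨u n, hu₀ n⟩‖ ^ 2 ≤ C) →
      ∃ φ : ℕ → ℕ, StrictMono φ ∧ ∃ y : H₁,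
        Tendsto (fun n => u (φ n)) atTop (nhds y)) :
    (LinearMap.ker A₁.toFun).map A₁.domain.subtype
        = (LinearMap.range A₀.toFun).topologicalClosure
            ⊔ ((LinearMap.ker A₁.toFun).map A₁.domain.subtype
                ⊓ (LinearMap.ker A₀.adjoint.toFun).map A₀.adjoint.domain.subtype) ∧
    ((LinearMap.ker A₁.toFun).map A₁.domain.subtype
        ⊓ (LinearMap.ker A₀.adjoint.toFun).map A₀.adjoint.domain.subtype)
        ≤ (LinearMap.range A₀.toFun)ᗮ ∧
    FiniteDimensional ℝ
      ↥((LinearMap.ker A₁.toFun).map A₁.domain.subtype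
          ⊓ (LinearMap.ker A₀.adjoint.toFun).map A₀.adjoint.domain.subtype) ∧
    IsClosed ((LinearMap.range A₀.toFun : Submodule ℝ H₁) : Set H₁) ∧
    IsClosed ((LinearMap.range A₁.toFun : Submodule ℝ H₂) : Set H₂) := by
  have hcpt : CompactJointEmbedding A₁ A₀† := hcpt
  have hA₁ : A₁.IsClosed := hclosed₁
  have hA₀adj : A₀†.IsClosed := adjoint_isClosed hdense₀
  have hperp : (LinearMap.range A₀.toFun)ᗮ = A₀†.ker := orthogonal_range_eq_ker_adjoint hdense₀
  have hclosure : (LinearMap.range A₀.toFun).topologicalClosure = A₀†.kerᗮ := by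
    rw [← hperp, Submodule.orthogonal_orthogonal_eq_closure]
  have hclosure_perp : (LinearMap.range A₀.toFun).topologicalClosureᗮ = A₀†.ker := by
    rw [hclosure, ← hperp, Submodule.triorthogonal_eq_orthogonal]
  have hle : (LinearMap.range A₀.toFun).topologicalClosure ≤ A₁.ker :=
    Submodule.topologicalClosure_minimal _ (fun _ ⟨x, hx⟩ => hx ▸ mem_ker.2 (hcomplex x))
      hA₁.isClosed_ker
  refine ⟨?_, inf_le_right.trans hperp.ge, hcpt.finiteDimensional hA₁ hA₀adj, ?_, ?_⟩
  · have := Submodule.sup_orthogonal_inf_of_hasOrthogonalProjection hle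
    rw [hclosure_perp, inf_comm] at this
    exact this.symm
  · obtain ⟨c, hc⟩ := hcpt.symm.exists_norm_le hA₀adj (hclosure ▸ hle)
    exact isClosed_range_of_adjoint_norm_le hdense₀ hclosed₀ hc
  · obtain ⟨c, hc⟩ := hcpt.exists_norm_le hA₁ (hclosure_perp ▸ Submodule.orthogonal_le hle)
    exact hA₁.isClosed_range_of_norm_le hc

/-- Hilbert complex `A₀ : H₀ → H₁`, `A₁ : H₁ → H₂` (densely defined, closed,
`range A₀ ⊆ ker A₁`). If `D(A₁) ∩ D(A₀*)` with the combined graph norm embeds compactly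
into `H₁`, then `ker A₁ = closure (range A₀) ⊕ (ker A₁ ∩ ker A₀*)` orthogonally, the
cohomology space `ker A₁ ∩ ker A₀*` is finite dimensional, and `range A₀`, `range A₁`
are closed. -/
theorem stmt18 {H₀ H₁ H₂ : Type*}
    [NormedAddCommGroup H₀] [InnerProductSpace ℝ H₀] [CompleteSpace H₀]
    [NormedAddCommGroup H₁] [InnerProductSpace ℝ H₁] [CompleteSpace H₁]
    [NormedAddCommGroup H₂] [InnerProductSpace ℝ H₂] [CompleteSpace H₂]
    (A₀ : H₀ →ₗ.[ℝ] H₁) (A₁ : H₁ →ₗ.[ℝ] H₂)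
    (hdense₀ : Dense (A₀.domain : Set H₀)) (hdense₁ : Dense (A₁.domain : Set H₁))
    (hclosed₀ : IsClosed (A₀.graph : Set (H₀ × H₁)))
    (hclosed₁ : IsClosed (A₁.graph : Set (H₁ × H₂)))
    -- complex property : range A₀ ⊆ ker A₁
    (hcomplex : ∀ x : A₀.domain, ∃ h : A₀ x ∈ A₁.domain, A₁ ⟨A₀ x, h⟩ = 0)
    -- compact embedding of D(A₁) ∩ D(A₀*) (combined graph norm) into H₁
    (hcpt : ∀ (u : ℕ → H₁) (hu₁ : ∀ n, u n ∈ A₁.domain) (hu₀ : ∀ n, u n ∈ A₀.adjoint.domain),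
      (∃ C : ℝ, ∀ n, ‖u n‖ ^ 2 + ‖A₁ ⟨u n, hu₁ n⟩‖ ^ 2 + ‖A₀.adjoint ⟨u n, hu₀ n⟩‖ ^ 2 ≤ C) →
      ∃ φ : ℕ → ℕ, StrictMono φ ∧ ∃ y : H₁,
        Tendsto (fun n => u (φ n)) atTop (nhds y)) :
    (LinearMap.ker A₁.toFun).map A₁.domain.subtype
        = (LinearMap.range A₀.toFun).topologicalClosure
            ⊔ ((LinearMap.ker A₁.toFun).map A₁.domain.subtype
                ⊓ (LinearMap.ker A₀.adjoint.toFun).map A₀.adjoint.domain.subtype) ∧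
    ((LinearMap.ker A₁.toFun).map A₁.domain.subtype
        ⊓ (LinearMap.ker A₀.adjoint.toFun).map A₀.adjoint.domain.subtype)
        ≤ (LinearMap.range A₀.toFun)ᗮ ∧
    FiniteDimensional ℝ
      ↥((LinearMap.ker A₁.toFun).map A₁.domain.subtype
          ⊓ (LinearMap.ker A₀.adjoint.toFun).map A₀.adjoint.domain.subtype) ∧
    IsClosed ((LinearMap.range A₀.toFun : Submodule ℝ H₁) : Set H₁) ∧
    IsClosed ((LinearMap.range A₁.toFun : Submodule ℝ H₂) : Set H₂) :=
  stmt18_general A₀ A₁ hdense₀ hclosed₀ hclosed₁ hcomplex hcpt
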